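/- Let Π be a tight logic program. Then X ⊆ atom(Π) is an answer set of Π if and only if X = T_A ∩ atom(Π) for some solution A for Δ_Π; moreover such a solution A is unique for each answer set X. -/
import Mathlib


/-- Signed literals over a domain `V`. -/
inductive Lit (V : Type) where
  | pos : V → Lit V
  | neg : V → Lit V
deriving DecidableEq

def Lit.var {V : Type} : Lit V → V
  | .pos v => v
  | .neg v => v

/-- A normal rule `head ← pos, not neg`. -/
structure Rule (V : Type) where
  head : V
  pos : Finset V
  neg : Finset V
deriving DecidableEq

variable {V : Type} [DecidableEq V]

/-- A body, identified with its pair of positive and negative atom sets. -/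
abbrev Body (V : Type) := Finset V × Finset V

/-- The domain `atom(Prog) ∪ body(Prog)`: atoms on the left, bodies on the right. -/
abbrev Dom (V : Type) := V ⊕ Body V

def atoms (Prog : Finset (Rule V)) : Finset V :=
  Prog.sup (fun r => insert r.head (r.pos ∪ r.neg))

def bodies (Prog : Finset (Rule V)) : Finset (Body V) :=
  Prog.image (fun r => (r.pos, r.neg))

/-- `body(p)`: the bodies of rules with head `p`. -/
def bodiesOf (Prog : Finset (Rule V)) (p : V) : Finset (Body V) :=
  (Prog.filter (fun r => r.head = p)).image (fun r => (r.pos, r.neg))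

/-- `Y` is closed under the Gelfond–Lifschitz reduct of `Prog` w.r.t. `X`. -/
def ReductClosed (Prog : Finset (Rule V)) (X Y : Set V) : Prop :=
  ∀ r ∈ Prog, ↑r.pos ⊆ Y → (∀ q ∈ r.neg, q ∉ X) → r.head ∈ Y

/-- `X` is an answer set of `Prog`: `X` is the least model of the reduct `Prog^X`. -/
def IsAnswerSet (Prog : Finset (Rule V)) (X : Set V) : Prop :=
  X = ⋂₀ {Y : Set V | ReductClosed Prog X Y}

/-- `Prog` is tight: its positive atom dependency graph is acyclic. -/
def Tight (Prog : Finset (Rule V)) : Prop :=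
  WellFounded (fun q p : V => ∃ r ∈ Prog, r.head = p ∧ q ∈ r.pos)

/-- Completion nogoods `Δ_β` for a body `β`. -/
def Dbody (β : Body V) : Set (Set (Lit (Dom V))) :=
  insert
    ((fun p => Lit.pos (Sum.inl p)) '' ↑β.1 ∪ (fun q => Lit.neg (Sum.inl q)) '' ↑β.2 ∪
      {Lit.neg (Sum.inr β)})
    ({δ | ∃ p ∈ β.1, δ = {Lit.neg (Sum.inl p), Lit.pos (Sum.inr β)}} ∪
     {δ | ∃ q ∈ β.2, δ = {Lit.pos (Sum.inl q), Lit.pos (Sum.inr β)}})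

/-- Completion nogoods `Δ_p` for an atom `p`. -/
def Datom (Prog : Finset (Rule V)) (p : V) : Set (Set (Lit (Dom V))) :=
  insert
    ((fun β => Lit.neg (Sum.inr β)) '' ↑(bodiesOf Prog p) ∪ {Lit.pos (Sum.inl p)})
    {δ | ∃ β ∈ bodiesOf Prog p, δ = {Lit.pos (Sum.inr β), Lit.neg (Sum.inl p)}}

/-- The completion nogoods `Δ_Prog`. -/
def DeltaPi (Prog : Finset (Rule V)) : Set (Set (Lit (Dom V))) :=
  (⋃ β ∈ bodies Prog, Dbody β) ∪ (⋃ p ∈ atoms Prog, Datom Prog p)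

/-- The domain `atom(Prog) ∪ body(Prog)` as a set. -/
def domPi (Prog : Finset (Rule V)) : Set (Dom V) :=
  (Sum.inl '' ↑(atoms Prog)) ∪ (Sum.inr '' ↑(bodies Prog))

def Tass (A : Set (Lit (Dom V))) : Set (Dom V) := {v | Lit.pos v ∈ A}
def Fass (A : Set (Lit (Dom V))) : Set (Dom V) := {v | Lit.neg v ∈ A}

/-- `A` is a total assignment over `dom(Prog) = atom(Prog) ∪ body(Prog)`. -/
def TotalAssign (Prog : Finset (Rule V)) (A : Set (Lit (Dom V))) : Prop :=
  (∀ l ∈ A, Lit.var l ∈ domPi Prog) ∧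
  Tass A ∪ Fass A = domPi Prog ∧ Tass A ∩ Fass A = ∅

/-- `A` is a solution for the set `Δ` of nogoods. -/
def IsSolution (Prog : Finset (Rule V)) (Δ : Set (Set (Lit (Dom V))))
    (A : Set (Lit (Dom V))) : Prop :=
  TotalAssign Prog A ∧ ∀ δ ∈ Δ, ¬ δ ⊆ A

/-! ### Auxiliary material -/

section Aux

variable (Prog : Finset (Rule V))

lemma head_mem_atoms {r : Rule V} (hr : r ∈ Prog) : r.head ∈ atoms Prog :=
  Finset.mem_sup.2 ⟨r, hr, Finset.mem_insert_self _ _⟩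

lemma pos_mem_atoms {r : Rule V} (hr : r ∈ Prog) {p : V} (hp : p ∈ r.pos) :
    p ∈ atoms Prog :=
  Finset.mem_sup.2 ⟨r, hr, Finset.mem_insert_of_mem (Finset.mem_union_left _ hp)⟩

lemma neg_mem_atoms {r : Rule V} (hr : r ∈ Prog) {q : V} (hq : q ∈ r.neg) :
    q ∈ atoms Prog :=
  Finset.mem_sup.2 ⟨r, hr, Finset.mem_insert_of_mem (Finset.mem_union_right _ hq)⟩

lemma mem_bodies_iff {β : Body V} :
    β ∈ bodies Prog ↔ ∃ r ∈ Prog, (r.pos, r.neg) = β := by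
  simp [bodies]

lemma mem_bodiesOf_iff {p : V} {β : Body V} :
    β ∈ bodiesOf Prog p ↔ ∃ r ∈ Prog, r.head = p ∧ (r.pos, r.neg) = β := by
  simp [bodiesOf, Finset.mem_image, Finset.mem_filter, and_assoc]

lemma bodiesOf_subset {p : V} : bodiesOf Prog p ⊆ bodies Prog := by
  intro β hβ
  rw [mem_bodiesOf_iff] at hβ
  rw [mem_bodies_iff]
  obtain ⟨r, hr, _, h⟩ := hβ
  exact ⟨r, hr, h⟩

lemma inl_mem_domPi {p : V} (hp : p ∈ atoms Prog) : Sum.inl p ∈ domPi Prog :=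
  Or.inl ⟨p, hp, rfl⟩

lemma inr_mem_domPi {β : Body V} (hβ : β ∈ bodies Prog) :
    (Sum.inr β : Dom V) ∈ domPi Prog :=
  Or.inr ⟨β, hβ, rfl⟩

lemma body_pos_atoms {β : Body V} (hβ : β ∈ bodies Prog) {p : V} (hp : p ∈ β.1) :
    p ∈ atoms Prog := by
  rw [mem_bodies_iff] at hβ
  obtain ⟨r, hr, h⟩ := hβ
  subst h
  exact pos_mem_atoms Prog hr hp

lemma body_neg_atoms {β : Body V} (hβ : β ∈ bodies Prog) {q : V} (hq : q ∈ β.2) :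
    q ∈ atoms Prog := by
  rw [mem_bodies_iff] at hβ
  obtain ⟨r, hr, h⟩ := hβ
  subst h
  exact neg_mem_atoms Prog hr hq

/-- Nogood membership: the "body false although satisfied" nogood. -/
lemma d1_mem {β : Body V} (hβ : β ∈ bodies Prog) :
    ((fun p => Lit.pos (Sum.inl p)) '' ↑β.1 ∪ (fun q => Lit.neg (Sum.inl q)) '' ↑β.2 ∪
      {Lit.neg (Sum.inr β)}) ∈ DeltaPi Prog :=
  Or.inl (Set.mem_biUnion hβ (Set.mem_insert _ _))

lemma d2_mem {β : Body V} (hβ : β ∈ bodies Prog) {p : V} (hp : p ∈ β.1) :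
    ({Lit.neg (Sum.inl p), Lit.pos (Sum.inr β)} : Set (Lit (Dom V))) ∈ DeltaPi Prog :=
  Or.inl (Set.mem_biUnion hβ (Set.mem_insert_of_mem _ (Or.inl ⟨p, hp, rfl⟩)))

lemma d3_mem {β : Body V} (hβ : β ∈ bodies Prog) {q : V} (hq : q ∈ β.2) :
    ({Lit.pos (Sum.inl q), Lit.pos (Sum.inr β)} : Set (Lit (Dom V))) ∈ DeltaPi Prog :=
  Or.inl (Set.mem_biUnion hβ (Set.mem_insert_of_mem _ (Or.inr ⟨q, hq, rfl⟩)))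

lemma d4_mem {p : V} (hp : p ∈ atoms Prog) :
    ((fun β => Lit.neg (Sum.inr β)) '' ↑(bodiesOf Prog p) ∪ {Lit.pos (Sum.inl p)})
      ∈ DeltaPi Prog :=
  Or.inr (Set.mem_biUnion hp (Set.mem_insert _ _))

lemma d5_mem {p : V} (hp : p ∈ atoms Prog) {β : Body V} (hβ : β ∈ bodiesOf Prog p) :
    ({Lit.pos (Sum.inr β), Lit.neg (Sum.inl p)} : Set (Lit (Dom V))) ∈ DeltaPi Prog :=
  Or.inr (Set.mem_biUnion hp (Set.mem_insert_of_mem _ ⟨β, hβ, rfl⟩))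

/-- In a total assignment, `neg v ∈ A ↔ pos v ∉ A` for `v` in the domain. -/
lemma total_neg_iff {A : Set (Lit (Dom V))} (hA : TotalAssign Prog A)
    {v : Dom V} (hv : v ∈ domPi Prog) : Lit.neg v ∈ A ↔ Lit.pos v ∉ A := by
  obtain ⟨-, htot, hdisj⟩ := hA
  constructor
  · intro hn hp
    have : v ∈ Tass A ∩ Fass A := ⟨hp, hn⟩
    rw [hdisj] at this
    exact this
  · intro hp
    have : v ∈ Tass A ∪ Fass A := by rw [htot]; exact hv
    rcases this with h | h
    · exact absurd h hp
    · exact h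

/-- A body literal is true iff the body is "satisfied" at the atom level. -/
lemma body_true_iff {A : Set (Lit (Dom V))} (hA : IsSolution Prog (DeltaPi Prog) A)
    {β : Body V} (hβ : β ∈ bodies Prog) :
    Lit.pos (Sum.inr β : Dom V) ∈ A ↔
      (∀ p ∈ β.1, Lit.pos (Sum.inl p : Dom V) ∈ A) ∧
      (∀ q ∈ β.2, Lit.pos (Sum.inl q : Dom V) ∉ A) := by
  obtain ⟨hAt, hnog⟩ := hA
  constructor
  · intro hβA
    refine ⟨fun p hp => ?_, fun q hq hqA => ?_⟩
    · by_contra hpA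
      have hn : Lit.neg (Sum.inl p : Dom V) ∈ A :=
        (total_neg_iff Prog hAt (inl_mem_domPi Prog (body_pos_atoms Prog hβ hp))).2 hpA
      exact hnog _ (d2_mem Prog hβ hp) (by
        intro l hl
        rcases hl with h | h
        · subst h; exact hn
        · simp only [Set.mem_singleton_iff] at h; subst h; exact hβA)
    · exact hnog _ (d3_mem Prog hβ hq) (by
        intro l hl
        rcases hl with h | h
        · subst h; exact hqA
        · simp only [Set.mem_singleton_iff] at h; subst h; exact hβA)
  · rintro ⟨hpos, hneg⟩
    by_contra hβA
    have hn : Lit.neg (Sum.inr β : Dom V) ∈ A :=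
      (total_neg_iff Prog hAt (inr_mem_domPi Prog hβ)).2 hβA
    refine hnog _ (d1_mem Prog hβ) ?_
    intro l hl
    rcases hl with h | h
    · rcases h with ⟨p, hp, rfl⟩ | ⟨q, hq, rfl⟩
      · exact hpos p (by simpa using hp)
      · exact (total_neg_iff Prog hAt
          (inl_mem_domPi Prog (body_neg_atoms Prog hβ (by simpa using hq)))).2
          (hneg q (by simpa using hq))
    · simp only [Set.mem_singleton_iff] at h; subst h; exact hn

/-- An atom literal is true iff some body of a rule with that head is true. -/
lemma atom_true_iff {A : Set (Lit (Dom V))} (hA : IsSolution Prog (DeltaPi Prog) A)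
    {p : V} (hp : p ∈ atoms Prog) :
    Lit.pos (Sum.inl p : Dom V) ∈ A ↔
      ∃ β ∈ bodiesOf Prog p, Lit.pos (Sum.inr β : Dom V) ∈ A := by
  obtain ⟨hAt, hnog⟩ := hA
  constructor
  · intro hpA
    by_contra h
    push_neg at h
    refine hnog _ (d4_mem Prog hp) ?_
    intro l hl
    rcases hl with ⟨β, hβ, rfl⟩ | hl
    · have hβ' : β ∈ bodiesOf Prog p := by simpa using hβ
      exact (total_neg_iff Prog hAt
        (inr_mem_domPi Prog (bodiesOf_subset Prog hβ'))).2 (h β hβ')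
    · simp only [Set.mem_singleton_iff] at hl; subst hl; exact hpA
  · rintro ⟨β, hβ, hβA⟩
    by_contra hpA
    have hn : Lit.neg (Sum.inl p : Dom V) ∈ A :=
      (total_neg_iff Prog hAt (inl_mem_domPi Prog hp)).2 hpA
    exact hnog _ (d5_mem Prog hp hβ) (by
      intro l hl
      rcases hl with h | h
      · subst h; exact hβA
      · simp only [Set.mem_singleton_iff] at h; subst h; exact hn)

/-- `β` satisfied by `X` at the atom level. -/
def BSat (X : Set V) (β : Body V) : Prop := ↑β.1 ⊆ X ∧ ∀ q ∈ β.2, q ∉ X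

/-- The intended value of each domain element, given the atom set `X`. -/
def dval (X : Set V) : Dom V → Prop
  | Sum.inl p => p ∈ X
  | Sum.inr β => BSat X β

/-- The canonical total assignment induced by `X`. -/
def canonA (X : Set V) : Set (Lit (Dom V)) :=
  {l | Lit.var l ∈ domPi Prog ∧
    (match l with | Lit.pos v => dval X v | Lit.neg v => ¬ dval X v)}

lemma pos_mem_canonA {X : Set V} {v : Dom V} :
    Lit.pos v ∈ canonA Prog X ↔ v ∈ domPi Prog ∧ dval X v := Iff.rfl

lemma neg_mem_canonA {X : Set V} {v : Dom V} :
    Lit.neg v ∈ canonA Prog X ↔ v ∈ domPi Prog ∧ ¬ dval X v := Iff.rfl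

lemma canonA_total (X : Set V) : TotalAssign Prog (canonA Prog X) := by
  refine ⟨fun l hl => hl.1, ?_, ?_⟩
  · ext v
    constructor
    · rintro (h | h)
      · exact h.1
      · exact h.1
    · intro hv
      by_cases h : dval X v
      · exact Or.inl ⟨hv, h⟩
      · exact Or.inr ⟨hv, h⟩
  · ext v
    simp only [Set.mem_inter_iff, Set.mem_empty_iff_false, iff_false, not_and]
    intro h1 h2
    exact h2.2 h1.2

/-- An answer set is closed under its own reduct. -/
lemma answerSet_closed {X : Set V} (hAS : IsAnswerSet Prog X) :
    ReductClosed Prog X X := by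
  intro r hr hpos hneg
  rw [hAS]
  intro Y hY
  exact hY r hr (fun q hq => (hAS ▸ hpos hq) Y hY) hneg

/-- Answer sets are supported. -/
lemma answerSet_supported {X : Set V} (hAS : IsAnswerSet Prog X)
    {p : V} (hp : p ∈ X) :
    ∃ r ∈ Prog, r.head = p ∧ ↑r.pos ⊆ X ∧ ∀ q ∈ r.neg, q ∉ X := by
  by_contra hns
  push_neg at hns
  have hclosed : ReductClosed Prog X (X \ {p}) := by
    intro r hr hpos hneg
    have hposX : ↑r.pos ⊆ X := fun q hq => (hpos hq).1
    have hhead : r.head ∈ X := answerSet_closed Prog hAS r hr hposX hneg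
    refine ⟨hhead, fun h => ?_⟩
    simp only [Set.mem_singleton_iff] at h
    rcases hns r hr h hposX with ⟨q, hq1, hq2⟩
    exact (hneg q hq1) hq2
  have h2 : ⋂₀ {Y : Set V | ReductClosed Prog X Y} ⊆ X \ {p} :=
    Set.sInter_subset_of_mem hclosed
  rw [← hAS] at h2
  exact (h2 hp).2 rfl

/-- The canonical assignment of an answer set is a solution. -/
lemma canonA_solution {X : Set V} (hX : X ⊆ ↑(atoms Prog)) (hAS : IsAnswerSet Prog X) :
    IsSolution Prog (DeltaPi Prog) (canonA Prog X) := by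
  refine ⟨canonA_total Prog X, ?_⟩
  rintro δ (hδ | hδ) hsub
  · -- body nogoods
    rw [Set.mem_iUnion₂] at hδ
    obtain ⟨β, hβ, hδ⟩ := hδ
    rcases hδ with rfl | (⟨p, hp, rfl⟩ | ⟨q, hq, rfl⟩)
    · -- the big body nogood
      have hβf : Lit.neg (Sum.inr β : Dom V) ∈ canonA Prog X :=
        hsub (Or.inr (Set.mem_singleton _))
      refine ((neg_mem_canonA Prog).1 hβf).2 ⟨fun p hp => ?_, fun q hq hqX => ?_⟩
      · have : Lit.pos (Sum.inl p : Dom V) ∈ canonA Prog X :=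
          hsub (Or.inl (Or.inl ⟨p, hp, rfl⟩))
        exact ((pos_mem_canonA Prog).1 this).2
      · have : Lit.neg (Sum.inl q : Dom V) ∈ canonA Prog X :=
          hsub (Or.inl (Or.inr ⟨q, by simpa using hq, rfl⟩))
        exact ((neg_mem_canonA Prog).1 this).2 hqX
    · -- {neg p, pos β} with p ∈ β.1
      have h1 : Lit.neg (Sum.inl p : Dom V) ∈ canonA Prog X := hsub (Or.inl rfl)
      have h2 : Lit.pos (Sum.inr β : Dom V) ∈ canonA Prog X :=
        hsub (Or.inr (Set.mem_singleton _))
      exact ((neg_mem_canonA Prog).1 h1).2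
        (((pos_mem_canonA Prog).1 h2).2.1 (by simpa using hp))
    · -- {pos q, pos β} with q ∈ β.2
      have h1 : Lit.pos (Sum.inl q : Dom V) ∈ canonA Prog X := hsub (Or.inl rfl)
      have h2 : Lit.pos (Sum.inr β : Dom V) ∈ canonA Prog X :=
        hsub (Or.inr (Set.mem_singleton _))
      exact ((pos_mem_canonA Prog).1 h2).2.2 q hq ((pos_mem_canonA Prog).1 h1).2
  · -- atom nogoods
    rw [Set.mem_iUnion₂] at hδ
    obtain ⟨p, hp, hδ⟩ := hδ
    rcases hδ with rfl | ⟨β, hβ, rfl⟩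
    · -- the big atom nogood: p true, all its bodies false
      have hpX : p ∈ X :=
        ((pos_mem_canonA Prog).1 (hsub (Or.inr (Set.mem_singleton _)))).2
      obtain ⟨r, hr, hrh, hrp, hrn⟩ := answerSet_supported Prog hAS hpX
      have hβof : (r.pos, r.neg) ∈ bodiesOf Prog p :=
        (mem_bodiesOf_iff Prog).2 ⟨r, hr, hrh, rfl⟩
      have : Lit.neg (Sum.inr (r.pos, r.neg) : Dom V) ∈ canonA Prog X :=
        hsub (Or.inl ⟨(r.pos, r.neg), by simpa using hβof, rfl⟩)
      exact ((neg_mem_canonA Prog).1 this).2 ⟨hrp, hrn⟩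
    · -- {pos β, neg p} with β ∈ bodiesOf p
      have h1 : Lit.pos (Sum.inr β : Dom V) ∈ canonA Prog X := hsub (Or.inl rfl)
      have h2 : Lit.neg (Sum.inl p : Dom V) ∈ canonA Prog X :=
        hsub (Or.inr (Set.mem_singleton _))
      obtain ⟨r, hr, hrh, hrβ⟩ := (mem_bodiesOf_iff Prog).1 hβ
      have hsat : BSat X β := ((pos_mem_canonA Prog).1 h1).2
      refine ((neg_mem_canonA Prog).1 h2).2 ?_
      have := answerSet_closed Prog hAS r hr (by rw [← hrβ] at hsat; exact hsat.1)
        (by rw [← hrβ] at hsat; exact hsat.2)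
      rwa [hrh] at this

/-- A solution whose positive atoms give `X` equals the canonical assignment. -/
lemma solution_eq_canonA {X : Set V} (hX : X ⊆ ↑(atoms Prog))
    {A : Set (Lit (Dom V))} (hA : IsSolution Prog (DeltaPi Prog) A)
    (hXA : X = {p : V | p ∈ atoms Prog ∧ Lit.pos (Sum.inl p : Dom V) ∈ A}) :
    A = canonA Prog X := by
  have hdom := hA.1.1
  have hatom : ∀ p ∈ atoms Prog, (Lit.pos (Sum.inl p : Dom V) ∈ A ↔ p ∈ X) := by
    intro p hp
    rw [hXA]
    exact ⟨fun h => ⟨hp, h⟩, fun h => h.2⟩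
  have hbody : ∀ β ∈ bodies Prog, (Lit.pos (Sum.inr β : Dom V) ∈ A ↔ BSat X β) := by
    intro β hβ
    rw [body_true_iff Prog hA hβ]
    constructor
    · rintro ⟨h1, h2⟩
      exact ⟨fun p hp => (hatom p (body_pos_atoms Prog hβ (by simpa using hp))).1
          (h1 p (by simpa using hp)),
        fun q hq hqX => h2 q hq ((hatom q (body_neg_atoms Prog hβ hq)).2 hqX)⟩
    · rintro ⟨h1, h2⟩
      exact ⟨fun p hp => (hatom p (body_pos_atoms Prog hβ hp)).2 (h1 (by simpa using hp)),
        fun q hq hqA => h2 q hq ((hatom q (body_neg_atoms Prog hβ hq)).1 hqA)⟩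
  have hval : ∀ v ∈ domPi Prog, (Lit.pos v ∈ A ↔ dval X v) := by
    rintro v (⟨p, hp, rfl⟩ | ⟨β, hβ, rfl⟩)
    · exact hatom p (by simpa using hp)
    · exact hbody β (by simpa using hβ)
  ext l
  cases l with
  | pos v =>
    rw [pos_mem_canonA]
    constructor
    · intro h
      have hv : v ∈ domPi Prog := hdom _ h
      exact ⟨hv, (hval v hv).1 h⟩
    · rintro ⟨hv, h⟩
      exact (hval v hv).2 h
  | neg v =>
    rw [neg_mem_canonA]
    constructor
    · intro h
      have hv : (Lit.neg v).var ∈ domPi Prog := hdom _ h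
      have hv' : v ∈ domPi Prog := hv
      refine ⟨hv', fun hd => ?_⟩
      exact ((total_neg_iff Prog hA.1 hv').1 h) ((hval v hv').2 hd)
    · rintro ⟨hv, h⟩
      exact (total_neg_iff Prog hA.1 hv).2 (fun hp => h ((hval v hv).1 hp))

/-- A solution induces an answer set (needs tightness). -/
lemma solution_answerSet (hT : Tight Prog) {X : Set V} (hX : X ⊆ ↑(atoms Prog))
    {A : Set (Lit (Dom V))} (hA : IsSolution Prog (DeltaPi Prog) A)
    (hXA : X = {p : V | p ∈ atoms Prog ∧ Lit.pos (Sum.inl p : Dom V) ∈ A}) :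
    IsAnswerSet Prog X := by
  have hatom : ∀ p ∈ atoms Prog, (Lit.pos (Sum.inl p : Dom V) ∈ A ↔ p ∈ X) := by
    intro p hp
    rw [hXA]
    exact ⟨fun h => ⟨hp, h⟩, fun h => h.2⟩
  have hXclosed : ReductClosed Prog X X := by
    intro r hr hpos hneg
    have hβ : (r.pos, r.neg) ∈ bodies Prog := (mem_bodies_iff Prog).2 ⟨r, hr, rfl⟩
    have hβA : Lit.pos (Sum.inr (r.pos, r.neg) : Dom V) ∈ A := by
      rw [body_true_iff Prog hA hβ]
      refine ⟨fun p hp => (hatom p (pos_mem_atoms Prog hr hp)).2 (hpos hp),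
        fun q hq hqA => hneg q hq ((hatom q (neg_mem_atoms Prog hr hq)).1 hqA)⟩
    have hβof : (r.pos, r.neg) ∈ bodiesOf Prog r.head :=
      (mem_bodiesOf_iff Prog).2 ⟨r, hr, rfl, rfl⟩
    exact (hatom r.head (head_mem_atoms Prog hr)).1
      ((atom_true_iff Prog hA (head_mem_atoms Prog hr)).2 ⟨_, hβof, hβA⟩)
  have hXleast : ∀ Y : Set V, ReductClosed Prog X Y → X ⊆ Y := by
    intro Y hY
    intro p hpX
    induction hT.apply p with
    | intro p _ ih =>
    have hpA : Lit.pos (Sum.inl p : Dom V) ∈ A := (hatom p (hX hpX)).2 hpX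
    obtain ⟨β, hβof, hβA⟩ := (atom_true_iff Prog hA (hX hpX)).1 hpA
    obtain ⟨r, hr, hrh, hrβ⟩ := (mem_bodiesOf_iff Prog).1 hβof
    subst hrh
    have hβb : β ∈ bodies Prog := bodiesOf_subset Prog hβof
    have hsat := (body_true_iff Prog hA hβb).1 hβA
    refine hY r hr (fun q hq => ?_) (fun q hq hqX => ?_)
    · have hqβ : q ∈ β.1 := by rw [← hrβ]; exact hq
      have hqX : q ∈ X :=
        (hatom q (body_pos_atoms Prog hβb hqβ)).1 (hsat.1 q hqβ)
      exact ih q ⟨r, hr, rfl, hq⟩ hqX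
    · have hqβ : q ∈ β.2 := by rw [← hrβ]; exact hq
      exact hsat.2 q hqβ ((hatom q (body_neg_atoms Prog hβb hqβ)).2 hqX)
  apply Set.Subset.antisymm
  · exact Set.subset_sInter (fun Y hY => hXleast Y hY)
  · exact Set.sInter_subset_of_mem hXclosed

end Aux

/-- for a tight program `Prog`, `X ⊆ atom(Prog)` is an answer set of `Prog`
iff `X = T_A ∩ atom(Prog)` for a solution `A` of `Δ_Prog`, which is moreover unique. -/
theorem stmt2 (Prog : Finset (Rule V)) (hT : Tight Prog)
    (X : Set V) (hX : X ⊆ ↑(atoms Prog)) :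
    IsAnswerSet Prog X ↔
      ∃! A : Set (Lit (Dom V)), IsSolution Prog (DeltaPi Prog) A ∧
        X = {p : V | p ∈ atoms Prog ∧ Lit.pos (Sum.inl p) ∈ A} := by
  constructor
  · intro hAS
    refine ⟨canonA Prog X, ⟨canonA_solution Prog hX hAS, ?_⟩, ?_⟩
    · ext p
      simp only [Set.mem_setOf_eq, pos_mem_canonA]
      constructor
      · intro hp
        exact ⟨hX hp, inl_mem_domPi Prog (hX hp), hp⟩
      · rintro ⟨-, -, hp⟩
        exact hp
    · rintro A ⟨hA, hXA⟩
      exact solution_eq_canonA Prog hX hA hXA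
  · rintro ⟨A, ⟨hA, hXA⟩, -⟩
    exact solution_answerSet Prog hT hX hA hXA
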